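/- arXiv:2306.16134 — 2 statements merged into one kernel-verified Lean document; each statement's English description precedes it below -/
import Mathlib

section
/- Let G be a digraph and X, Y ⊆ V(G). Then the family ℐ = { last-vertex sets of collections of pairwise vertex-disjoint X → Y paths } is the collection of independent sets of a matroid on Y. -/
/-- A (directed) path given as a nonempty list of pairwise-distinct vertices
with consecutive pairs being edges of the digraph `G`. -/
def IsPathList {V : Type*} (G : V → V → Prop) (p : List V) : Prop :=
  p ≠ [] ∧ p.Nodup ∧ p.Chain' G

/-- The first vertex of the list `p` belongs to `A`. -/
def FirstIn {V : Type*} (p : List V) (A : Set V) : Prop := ∃ a ∈ A, p.head? = some a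

/-- The last vertex of the list `p` belongs to `A`. -/
def LastIn {V : Type*} (p : List V) (A : Set V) : Prop := ∃ a ∈ A, p.getLast? = some a

/-- `X` is an `(A,B)`-separator in `G`: every path of `G` starting in `A` and
ending in `B` meets `X`. -/
def IsSeparator {V : Type*} (G : V → V → Prop) (A B X : Set V) : Prop :=
  ∀ p : List V, IsPathList G p → FirstIn p A → LastIn p B → ∃ v ∈ p, v ∈ X

/-- Two lists of vertices share no vertex. -/
def ListsDisjoint {V : Type*} (p q : List V) : Prop := ∀ v, v ∈ p → v ∉ q

/-- `I` is an independent set of the gammoid `M(G,X,Y)` : `I ⊆ Y` and `I` is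
the set of last vertices of a collection of pairwise vertex-disjoint
`X → Y` paths. -/
def IsGammoidIndep {V : Type*} (G : V → V → Prop) (X Y : Set V) (I : Set V) : Prop :=
  I ⊆ Y ∧ ∃ P : V → List V,
    (∀ v ∈ I, IsPathList G (P v) ∧ FirstIn (P v) X ∧ (P v).getLast? = some v) ∧
    (∀ u ∈ I, ∀ v ∈ I, u ≠ v → ListsDisjoint (P u) (P v))

/-!
Only the augmentation axiom needs work. Given disjoint path systems from `X` onto `I` and onto
`J` with `|I| < |J|`, add a new sink `none` entered from every vertex of `J \ I`. A set
separating `X` from `I ∪ {none}` has at least `|I| + 1` vertices: if it contains `none`, its other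
vertices meet the `|I|` paths onto `I`; otherwise it meets the `|J|` paths onto `J`, extended to
`none` when they end outside `I`. By Menger's theorem there are then `|I| + 1` disjoint paths from
`X` onto `I ∪ {none}`; the one ending at `none` comes from some `y ∈ J \ I`, and the others link
`X` onto `I`.

Menger's theorem is proved by induction on the number of edges. Delete an edge `uv`. If a
separator `S` with fewer than `k` vertices appears, then `S + u` and `S + v` separate in `G`, so
`|S| = k - 1`, and by induction the smaller graph links `A` onto `S + u` and `S + v` into `B`.
These two systems can only meet at their common ends in `S`, so they glue along `S` and along
the edge `uv`.
-/

open Function Set List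

section

variable {α : Type*} {G H : α → α → Prop} {A B S T : Set α} {p q w : List α} {x : α}

theorem List.getLast?_ne_of_mem_left {l₁ l₂ : List α} (h : (l₁ ++ x :: l₂).Nodup) {y : α}
    (hy : y ∈ l₁) : (l₁ ++ x :: l₂).getLast? ≠ some y := by
  rw [getLast?_append_of_ne_nil _ (cons_ne_nil x l₂)]
  exact fun hl => disjoint_of_nodup_append h hy (mem_of_getLast? hl)

theorem List.head?_ne_of_mem_right {l₁ l₂ : List α} (h : (l₁ ++ x :: l₂).Nodup) {y : α}
    (hy : y ∈ l₂) : (l₁ ++ x :: l₂).head? ≠ some y := by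
  cases l₁ <;> grind

theorem List.exists_suffix_of_exists_mem : ∀ {l : List α}, (∃ x ∈ l, x ∈ S) →
    ∃ z t, z :: t <:+ l ∧ z ∈ S ∧ ∀ y ∈ t, y ∉ S
  | [], h => by simp at h
  | a :: l, h => by
    by_cases hl : ∃ x ∈ l, x ∈ S
    · obtain ⟨z, t, hsuf, hz, ht⟩ := exists_suffix_of_exists_mem hl
      exact ⟨z, t, hsuf.trans (suffix_cons a l), hz, ht⟩
    · refine ⟨a, l, suffix_refl _, ?_, fun y hy hyS => hl ⟨y, hy, hyS⟩⟩
      obtain ⟨x, hx, hxS⟩ := h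
      rcases mem_cons.1 hx with rfl | hx
      exacts [hxS, absurd ⟨x, hx, hxS⟩ hl]

theorem IsPathList.ne_nil (hp : IsPathList G p) : p ≠ [] := hp.1

theorem IsPathList.nodup (hp : IsPathList G p) : p.Nodup := hp.2.1

theorem IsPathList.isChain (hp : IsPathList G p) : p.IsChain G := hp.2.2

theorem isPathList_singleton : IsPathList G [x] :=
  ⟨cons_ne_nil x [], nodup_singleton x, .singleton x⟩

theorem IsPathList.mono (hp : IsPathList G p) (hGH : ∀ a b, G a b → H a b) : IsPathList H p :=
  ⟨hp.ne_nil, hp.nodup, hp.isChain.imp hGH⟩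

theorem IsPathList.mono_of_mem (hp : IsPathList G p)
    (hGH : ∀ a b, a ∈ p → b ∈ p → G a b → H a b) : IsPathList H p :=
  ⟨hp.ne_nil, hp.nodup, hp.isChain.imp_of_mem_imp hGH⟩

theorem IsPathList.append (hp : IsPathList G p) (hq : IsPathList G q) (hpq : p.Disjoint q)
    (hG : ∀ a ∈ p.getLast?, ∀ b ∈ q.head?, G a b) : IsPathList G (p ++ q) :=
  ⟨by simp [hp.ne_nil], hp.nodup.append hq.nodup hpq, hp.isChain.append hq.isChain hG⟩

theorem IsPathList.append_tail (hp : IsPathList G p) (hq : IsPathList G q)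
    (hpx : p.getLast? = some x) (hqx : q.head? = some x) (hpq : ∀ y ∈ p, y ∈ q → y = x) :
    IsPathList G (p ++ q.tail) ∧ (p ++ q.tail).getLast? = q.getLast? := by
  obtain ⟨r, rfl⟩ := head?_eq_some_iff.1 hqx
  rcases r with _ | ⟨c, r⟩
  · simpa [hpx] using hp
  have hxr : x ∉ c :: r := (nodup_cons.1 hq.nodup).1
  refine ⟨hp.append ⟨cons_ne_nil c r, (nodup_cons.1 hq.nodup).2, hq.isChain.tail⟩
    (fun y hyp hyr => hxr (hpq y hyp (mem_cons_of_mem x hyr) ▸ hyr)) ?_,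
    by rw [tail_cons, getLast?_append_of_ne_nil _ (cons_ne_nil c r), getLast?_cons_cons]⟩
  intro a ha b hb
  obtain rfl : a = x := Option.some_injective _ (ha.symm.trans hpx)
  exact (isChain_cons.1 hq.isChain).1 b hb

theorem IsPathList.reverse (hp : IsPathList G p) : IsPathList (flip G) p.reverse :=
  ⟨by simpa using hp.ne_nil, nodup_reverse.2 hp.nodup, isChain_reverse.2 hp.isChain⟩

theorem firstIn_reverse : FirstIn p.reverse A ↔ LastIn p A := by
  simp [FirstIn, LastIn]

theorem lastIn_reverse : LastIn p.reverse A ↔ FirstIn p A := by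
  simp [FirstIn, LastIn]

theorem FirstIn.append (h : FirstIn p A) (q : List α) : FirstIn (p ++ q) A := by
  obtain ⟨a, ha, hpa⟩ := h
  exact ⟨a, ha, by simp [head?_append, hpa]⟩

theorem exists_isPathList_subset_of_isChain :
    ∀ {w : List α}, w ≠ [] → w.IsChain G →
      ∃ p, IsPathList G p ∧ p.head? = w.head? ∧ p.getLast? = w.getLast? ∧ p ⊆ w
  | [], hw, _ => absurd rfl hw
  | [a], _, _ => ⟨[a], isPathList_singleton, rfl, rfl, fun _ h => h⟩
  | a :: b :: w, _, hc => by
    by_cases ha : a ∈ b :: w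
    · obtain ⟨s, t, hst⟩ := append_of_mem ha
      have hsuf : a :: t <:+ a :: b :: w := ⟨a :: s, by rw [hst]; rfl⟩
      have : t.length < w.length + 1 := by
        have := congrArg length hst
        simp only [length_cons, length_append] at this
        omega
      obtain ⟨p, hp, hhead, hlast, hsub⟩ :=
        exists_isPathList_subset_of_isChain (cons_ne_nil a t) (hc.suffix hsuf)
      refine ⟨p, hp, hhead, ?_, fun _ h => hsuf.subset (hsub h)⟩
      rw [hlast, hst, ← cons_append, getLast?_append_of_ne_nil _ (cons_ne_nil a t)]
    · obtain ⟨p, hp, hhead, hlast, hsub⟩ :=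
        exists_isPathList_subset_of_isChain (cons_ne_nil b w) hc.tail
      refine ⟨a :: p, ⟨cons_ne_nil a p, nodup_cons.2 ⟨fun h => ha (hsub h), hp.nodup⟩, ?_⟩,
        rfl, ?_, cons_subset_cons a hsub⟩
      · exact hp.isChain.cons (by rw [hhead]; simpa using (isChain_cons_cons.1 hc).1)
      · obtain ⟨c, r, rfl⟩ := exists_cons_of_ne_nil hp.ne_nil
        simpa using hlast
  termination_by w => w.length

theorem IsSeparator.flip (hS : IsSeparator G A B S) : IsSeparator (flip G) B A S := by
  intro p hp hpB hpA
  obtain ⟨x, hx, hxS⟩ := hS p.reverse hp.reverse (firstIn_reverse.2 hpA) (lastIn_reverse.2 hpB)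
  exact ⟨x, mem_reverse.1 hx, hxS⟩

theorem IsSeparator.exists_mem_of_isChain (hS : IsSeparator G A B S) (hw : w.IsChain G)
    (hwA : FirstIn w A) (hwB : LastIn w B) : ∃ x ∈ w, x ∈ S := by
  obtain ⟨a, ha, hwa⟩ := hwA
  obtain ⟨b, hb, hwb⟩ := hwB
  obtain ⟨p, hp, hhead, hlast, hsub⟩ :=
    exists_isPathList_subset_of_isChain (ne_nil_of_mem (mem_of_head? hwa)) hw
  obtain ⟨x, hx, hxS⟩ := hS p hp ⟨a, ha, hhead.trans hwa⟩ ⟨b, hb, hlast.trans hwb⟩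
  exact ⟨x, hsub hx, hxS⟩

theorem IsSeparator.mem_of_mem_of_mem (hS : IsSeparator G A B S)
    (hp : IsPathList G p) (hq : IsPathList G q) (hpA : FirstIn p A) (hqB : LastIn q B)
    (hpS : ∀ y ∈ p, y ∈ S → p.getLast? = some y) (hqS : ∀ y ∈ q, y ∈ S → q.head? = some y)
    (hxp : x ∈ p) (hxq : x ∈ q) : x ∈ S := by
  by_contra hx
  obtain ⟨p₁, p₂, rfl⟩ := append_of_mem hxp
  obtain ⟨q₁, q₂, rfl⟩ := append_of_mem hxq
  obtain ⟨y, hyw, hyS⟩ := hS.exists_mem_of_isChain (w := p₁ ++ x :: q₂)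
    (isChain_split.2 ⟨(isChain_split.1 hp.isChain).1, (isChain_split.1 hq.isChain).2⟩)
    (by obtain ⟨a, ha, h⟩ := hpA; exact ⟨a, ha, by simpa using h⟩)
    (by obtain ⟨b, hb, h⟩ := hqB; exact ⟨b, hb, by simpa using h⟩)
  rcases mem_append.1 hyw with hy | hy
  · exact getLast?_ne_of_mem_left hp.nodup hy (hpS y (by simp [hy]) hyS)
  rcases mem_cons.1 hy with rfl | hy
  · exact hx hyS
  · exact head?_ne_of_mem_right hq.nodup hy (hqS y (by simp [hy]) hyS)

theorem IsSeparator.insert (hS : IsSeparator H A B S)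
    (hGH : ∀ a b, G a b → a ≠ x → b ≠ x → H a b) : IsSeparator G A B (insert x S) := by
  intro p hp hpA hpB
  by_cases hx : x ∈ p
  · exact ⟨x, hx, mem_insert x S⟩
  obtain ⟨y, hy, hyS⟩ := hS p (hp.mono_of_mem fun a b ha hb hab =>
    hGH a b hab (fun h => hx (h ▸ ha)) (fun h => hx (h ▸ hb))) hpA hpB
  exact ⟨y, hy, mem_insert_of_mem x hyS⟩

theorem IsSeparator.of_isSeparator_right {Z : Set α} (hZ : IsSeparator G A B Z)
    (hT : IsSeparator H Z B T) (hGH : ∀ a b, G a b → b ∉ Z → H a b) : IsSeparator G A B T := by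
  intro p hp hpA hpB
  obtain ⟨z, t, hsuf, hz, ht⟩ := exists_suffix_of_exists_mem (hZ p hp hpA hpB)
  have hzt : IsPathList H (z :: t) :=
    ⟨cons_ne_nil z t, hp.nodup.sublist hsuf.sublist, (hp.isChain.suffix hsuf).imp_of_mem_tail_imp
      fun a b _ hb hab => hGH a b hab (ht b hb)⟩
  obtain ⟨b, hb, hpb⟩ := hpB
  obtain ⟨y, hy, hyT⟩ := hT (z :: t) hzt ⟨z, hz, rfl⟩
    ⟨b, hb, by obtain ⟨s, rfl⟩ := hsuf; rwa [getLast?_append_of_ne_nil _ (cons_ne_nil z t)] at hpb⟩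
  exact ⟨y, hsuf.subset hy, hyT⟩

theorem IsSeparator.of_isSeparator_left {Z : Set α} (hZ : IsSeparator G A B Z)
    (hT : IsSeparator H A Z T) (hGH : ∀ a b, G a b → a ∉ Z → H a b) : IsSeparator G A B T :=
  (hZ.flip.of_isSeparator_right hT.flip fun a b hab hb => hGH b a hab hb).flip

theorem isSeparator_inter (hG : ∀ a b, ¬ G a b) : IsSeparator G A B (A ∩ B) := by
  rintro (_ | ⟨c, _ | ⟨d, r⟩⟩) hp ⟨a, ha, hpa⟩ ⟨b, hb, hpb⟩
  · exact absurd rfl hp.ne_nil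
  · simp only [head?_cons, getLast?_singleton, Option.some.injEq] at hpa hpb
    exact ⟨c, mem_singleton_self c, hpa ▸ ha, hpb ▸ hb⟩
  · exact absurd (isChain_cons_cons.1 hp.isChain).1 (hG c d)

def IsLinkage (G : α → α → Prop) (A T : Set α) (P : α → List α) : Prop :=
  (∀ t ∈ T, IsPathList G (P t) ∧ FirstIn (P t) A ∧ (P t).getLast? = some t) ∧
    T.Pairwise (ListsDisjoint on P)

theorem isGammoidIndep_iff {X Y I : Set α} :
    IsGammoidIndep G X Y I ↔ I ⊆ Y ∧ ∃ P, IsLinkage G X I P :=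
  Iff.rfl

theorem ncard_le_ncard_of_pairwise_listsDisjoint {ι β : Type*} [Finite β] {I : Set ι}
    {P : ι → List β} {S : Set β} (hP : I.Pairwise (ListsDisjoint on P))
    (hS : ∀ i ∈ I, ∃ x ∈ P i, x ∈ S) : I.ncard ≤ S.ncard := by
  rcases I.eq_empty_or_nonempty with rfl | ⟨i, hi⟩
  · simp
  have : Nonempty β := ⟨(hS i hi).choose⟩
  choose! f hfP hfS using hS
  refine ncard_le_ncard_of_injOn f hfS fun i hi j hj hij => ?_
  by_contra hne
  exact hP hi hj hne (f i) (hfP i hi) (hij ▸ hfP j hj)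

theorem isLinkage_singleton : IsLinkage G A A fun a => [a] :=
  ⟨fun a ha => ⟨isPathList_singleton, ⟨a, ha, rfl⟩, rfl⟩,
    fun _ _ _ _ hst _ hs ht => hst ((mem_singleton.1 hs).symm.trans (mem_singleton.1 ht))⟩

namespace IsLinkage

variable {P : α → List α} {s t a : α}

theorem isPathList (hP : IsLinkage G A T P) (ht : t ∈ T) : IsPathList G (P t) := (hP.1 t ht).1

theorem firstIn (hP : IsLinkage G A T P) (ht : t ∈ T) : FirstIn (P t) A := (hP.1 t ht).2.1

theorem getLast?_eq (hP : IsLinkage G A T P) (ht : t ∈ T) : (P t).getLast? = some t :=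
  (hP.1 t ht).2.2

theorem mem_self (hP : IsLinkage G A T P) (ht : t ∈ T) : t ∈ P t :=
  mem_of_getLast? (hP.getLast?_eq ht)

theorem mono (hP : IsLinkage G A T P) (hGH : ∀ a b, G a b → H a b) : IsLinkage H A T P :=
  ⟨fun _ ht => ⟨(hP.isPathList ht).mono hGH, hP.firstIn ht, hP.getLast?_eq ht⟩, hP.2⟩

theorem subset (hP : IsLinkage G A T P) {T' : Set α} (hT' : T' ⊆ T) : IsLinkage G A T' P :=
  ⟨fun t ht => hP.1 t (hT' ht), hP.2.mono hT'⟩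

theorem eq_of_mem (hP : IsLinkage G A T P) (hs : s ∈ T) (ht : t ∈ T) (h : t ∈ P s) : t = s := by
  by_contra hne
  exact hP.2 ht hs hne t (hP.mem_self ht) h

theorem exists_head?_eq [Finite α] (hP : IsLinkage G A T P) (hA : A.ncard ≤ T.ncard)
    (ha : a ∈ A) : ∃ t ∈ T, (P t).head? = some a := by
  have hinj : InjOn (fun t => (P t).head?) T := by
    intro s hs t ht hst
    by_contra hne
    obtain ⟨c, -, hc⟩ := hP.firstIn hs
    exact hP.2 hs ht hne c (mem_of_head? hc) (mem_of_head? (hst.symm.trans hc))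
  have himage : (fun t => (P t).head?) '' T = some '' A := by
    refine eq_of_subset_of_ncard_le ?_ ?_
    · rintro _ ⟨t, ht, rfl⟩
      obtain ⟨c, hc, hpc⟩ := hP.firstIn ht
      exact ⟨c, hc, hpc.symm⟩
    · rw [hinj.ncard_image, ncard_image_of_injective _ (Option.some_injective α)]
      exact hA
  obtain ⟨t, ht, hta⟩ := himage.symm ▸ mem_image_of_mem some ha
  exact ⟨t, ht, hta⟩

theorem head?_eq_of_mem [Finite α] (hP : IsLinkage G A T P) (hA : A.ncard ≤ T.ncard)
    (ht : t ∈ T) (ha : a ∈ A) (hat : a ∈ P t) : (P t).head? = some a := by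
  obtain ⟨s, hs, hsa⟩ := hP.exists_head?_eq hA ha
  obtain rfl : s = t := by
    by_contra hne
    exact hP.2 hs ht hne a (mem_of_head? hsa) hat
  exact hsa

end IsLinkage

theorem IsSeparator.eq_of_mem_of_mem [Finite α] {Z₁ Z₂ : Set α} {P Q : α → List α} {s t : α}
    (hS : IsSeparator G A B S) (hSZ₁ : S ⊆ Z₁) (hSZ₂ : S ⊆ Z₂)
    (hP : IsLinkage G A Z₁ P) (hQ : IsLinkage G Z₂ T Q) (hTB : T ⊆ B)
    (hT : Z₂.ncard ≤ T.ncard) (hs : s ∈ Z₁) (ht : t ∈ T) (hxs : x ∈ P s) (hxt : x ∈ Q t) :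
    x ∈ S ∧ x = s ∧ (Q t).head? = some x := by
  have hxS : x ∈ S := hS.mem_of_mem_of_mem (hP.isPathList hs) (hQ.isPathList ht) (hP.firstIn hs)
    ⟨t, hTB ht, hQ.getLast?_eq ht⟩
    (fun y hy hyS => by rw [hP.eq_of_mem hs (hSZ₁ hyS) hy]; exact hP.getLast?_eq hs)
    (fun y hy hyS => hQ.head?_eq_of_mem hT ht (hSZ₂ hyS) hy) hxs hxt
  exact ⟨hxS, hP.eq_of_mem hs (hSZ₁ hxS) hxs, hQ.head?_eq_of_mem hT ht (hSZ₂ hxS) hxt⟩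

theorem IsLinkage.exists_join {Z : Set α} {P Q : α → List α} (hP : IsLinkage G A Z P)
    (hQ : IsLinkage G Z T Q)
    (hPQ : ∀ s ∈ Z, ∀ t ∈ T, ∀ x ∈ P s, x ∈ Q t → x = s ∧ (Q t).head? = some x) :
    ∃ R, IsLinkage G A T R := by
  rcases isEmpty_or_nonempty α with hα | hα
  · exact ⟨Q, fun t => isEmptyElim t, fun t => isEmptyElim t⟩
  choose! start hstart hQstart using fun t (ht : t ∈ T) =>
    (hQ.firstIn ht : ∃ s ∈ Z, (Q t).head? = some s)
  have hstart_inj {t t'} (ht : t ∈ T) (ht' : t' ∈ T) (h : start t = start t') : t = t' := by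
    by_contra hne
    exact hQ.2 ht ht' hne _ (mem_of_head? (hQstart t ht)) (h ▸ mem_of_head? (hQstart t' ht'))
  have hPQ' {t t' x} (ht : t ∈ T) (ht' : t' ∈ T) (hxt : x ∈ P (start t)) (hxt' : x ∈ Q t') :
      t = t' := by
    obtain ⟨rfl, hx⟩ := hPQ _ (hstart t ht) t' ht' x hxt hxt'
    exact hstart_inj ht ht' (Option.some_injective _ (hx.symm.trans (hQstart t' ht')))
  refine ⟨fun t => P (start t) ++ (Q t).tail, fun t ht => ?_, fun t ht t' ht' hne x hx hx' => ?_⟩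
  · have hs := hstart t ht
    obtain ⟨hpath, hlast⟩ := (hP.isPathList hs).append_tail (hQ.isPathList ht)
      (hP.getLast?_eq hs) (hQstart t ht) fun y hy hyt => (hPQ _ hs t ht y hy hyt).1
    exact ⟨hpath, (hP.firstIn hs).append _, hlast.trans (hQ.getLast?_eq ht)⟩
  rcases mem_append.1 hx with h | h <;> rcases mem_append.1 hx' with h' | h'
  · exact hP.2 (hstart t ht) (hstart t' ht') (fun h => hne (hstart_inj ht ht' h)) x h h'
  · exact hne (hPQ' ht ht' h (mem_of_mem_tail h'))
  · exact hne (hPQ' ht' ht h' (mem_of_mem_tail h)).symm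
  · exact hQ.2 ht ht' hne x (mem_of_mem_tail h) (mem_of_mem_tail h')

theorem IsLinkage.extend_edge [DecidableEq α] {u v : α} {P : α → List α}
    (hP : IsLinkage H A (insert u S) P) (hHG : ∀ a b, H a b → G a b) (huv : G u v)
    (huS : u ∉ S) (hvP : ∀ s ∈ insert u S, v ∉ P s) :
    IsLinkage G A (insert v S) fun s => if s = v then P u ++ [v] else P s := by
  have hu := mem_insert u S
  have hS' {s} (hs : s ∈ S) : s ∈ insert u S := mem_insert_of_mem u hs
  have hSv {s} (hs : s ∈ insert v S) (hsv : s ≠ v) : s ∈ S := (mem_insert_iff.1 hs).resolve_left hsv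
  refine ⟨fun s hs => ?_, ?_⟩
  · by_cases hsv : s = v
    · simp only [hsv, if_true]
      refine ⟨((hP.isPathList hu).mono hHG).append isPathList_singleton
        (fun x hx hxv => hvP u hu (mem_singleton.1 hxv ▸ hx)) ?_, (hP.firstIn hu).append _,
        by simp⟩
      rw [hP.getLast?_eq hu]
      simpa using huv
    · simp only [hsv, if_false]
      have hs := hS' (hSv hs hsv)
      exact ⟨(hP.isPathList hs).mono hHG, hP.firstIn hs, hP.getLast?_eq hs⟩
  have hPu {s} (hs : s ∈ S) : ListsDisjoint (P u ++ [v]) (P s) := by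
    intro x hx hxs
    rcases mem_append.1 hx with hx | hx
    · exact hP.2 hu (hS' hs) (fun h => huS (h ▸ hs)) x hx hxs
    · exact hvP s (hS' hs) (mem_singleton.1 hx ▸ hxs)
  intro s hs s' hs' hne x hx hx'
  by_cases hsv : s = v <;> by_cases hs'v : s' = v <;>
    simp only [hsv, hs'v, if_true, if_false] at hx hx'
  · exact hne (hsv.trans hs'v.symm)
  · exact hPu (hSv hs' hs'v) x hx hx'
  · exact hPu (hSv hs hsv) x hx' hx
  · exact hP.2 (hS' (hSv hs hsv)) (hS' (hSv hs' hs'v)) hne x hx hx'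

-- The witness is `P` with its path to `u` extended by `uv`; no path of `P` passes through `v`,
-- because `v` starts a path of `Q`.
theorem IsLinkage.exists_extend_edge [Finite α] {u v : α} {P Q : α → List α}
    (hP : IsLinkage H A (insert u S) P) (hS : IsSeparator H A B S) (hHG : ∀ a b, H a b → G a b)
    (huv : G u v) (huS : u ∉ S) (hvS : v ∉ S) (hQ : IsLinkage H (insert v S) T Q)
    (hTB : T ⊆ B) (hT : (insert v S).ncard ≤ T.ncard) :
    ∃ P', IsLinkage G A (insert v S) P' ∧ ∀ s ∈ insert v S, ∀ t ∈ T, ∀ x ∈ P' s, x ∈ Q t →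
      x = s ∧ (Q t).head? = some x := by
  classical
  have hcross {s t x} (hs : s ∈ insert u S) (ht : t ∈ T) (hxs : x ∈ P s) (hxt : x ∈ Q t) :
      x ∈ S ∧ x = s ∧ (Q t).head? = some x :=
    hS.eq_of_mem_of_mem (subset_insert u S) (subset_insert v S) hP hQ hTB hT hs ht hxs hxt
  have hvP (s) (hs : s ∈ insert u S) (hv : v ∈ P s) : False := by
    obtain ⟨t, ht, htv⟩ := hQ.exists_head?_eq hT (mem_insert v S)
    exact hvS (hcross hs ht hv (mem_of_head? htv)).1
  refine ⟨_, hP.extend_edge hHG huv huS hvP, fun s hs t ht x hx hxt => ?_⟩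
  by_cases hsv : s = v
  · simp only [hsv, if_true, mem_append, List.mem_singleton] at hx ⊢
    rcases hx with hx | rfl
    · obtain ⟨hxS, rfl, -⟩ := hcross (mem_insert u S) ht hx hxt
      exact (huS hxS).elim
    · exact ⟨rfl, hQ.head?_eq_of_mem hT ht (mem_insert x S) hxt⟩
  · simp only [hsv, if_false] at hx
    exact (hcross (mem_insert_of_mem u ((mem_insert_iff.1 hs).resolve_left hsv)) ht hx hxt).2

theorem exists_isLinkage_of_deleteEdge [Finite α] {k : ℕ} {u v : α} (huv : G u v)
    (hH : ∀ a b, H a b ↔ G a b ∧ (a, b) ≠ (u, v))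
    (ihH : ∀ A' B' : Set α, (∀ S, IsSeparator H A' B' S → k ≤ S.ncard) →
      ∃ T ⊆ B', k ≤ T.ncard ∧ ∃ P, IsLinkage H A' T P)
    (hk : ∀ S, IsSeparator G A B S → k ≤ S.ncard) :
    ∃ T ⊆ B, k ≤ T.ncard ∧ ∃ P, IsLinkage G A T P := by
  have hHG (a b) (h : H a b) : G a b := ((hH a b).1 h).1
  by_cases hkH : ∀ S, IsSeparator H A B S → k ≤ S.ncard
  · obtain ⟨T, hTB, hkT, P, hP⟩ := ihH A B hkH
    exact ⟨T, hTB, hkT, P, hP.mono hHG⟩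
  push Not at hkH
  obtain ⟨S, hS, hSk⟩ := hkH
  -- `S` plus either end of the deleted edge separates in `G`, so `|S| = k - 1`
  have hcard {x} (hx : IsSeparator G A B (insert x S)) : x ∉ S ∧ (insert x S).ncard = k := by
    have h₁ := hk _ hx
    have h₂ := ncard_insert_le x S
    refine ⟨fun hxS => ?_, by omega⟩
    rw [insert_eq_of_mem hxS] at h₁
    omega
  have hGH {a b} (hab : G a b) (h : a ≠ u ∨ b ≠ v) : H a b :=
    (hH a b).2 ⟨hab, fun he => by obtain ⟨rfl, rfl⟩ := Prod.mk_inj.1 he; simp at h⟩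
  have hSu := hS.insert (G := G) fun a b hab ha _ => hGH hab (.inl ha)
  have hSv := hS.insert (G := G) fun a b hab _ hb => hGH hab (.inr hb)
  obtain ⟨huS, hSuk⟩ := hcard hSu
  obtain ⟨hvS, hSvk⟩ := hcard hSv
  obtain ⟨T₁, hT₁, hkT₁, P, hP⟩ := ihH A (insert u S) fun T hT =>
    hk T (hSu.of_isSeparator_left hT fun a b hab ha =>
      hGH hab (.inl fun h => ha (h ▸ mem_insert u S)))
  obtain ⟨T, hTB, hkT, Q, hQ⟩ := ihH (insert v S) B fun T hT =>
    hk T (hSv.of_isSeparator_right hT fun a b hab hb =>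
      hGH hab (.inr fun h => hb (h ▸ mem_insert v S)))
  rw [eq_of_subset_of_ncard_le hT₁ (hSuk.trans_le hkT₁)] at hP
  obtain ⟨P', hP', hP'Q⟩ :=
    hP.exists_extend_edge hS hHG huv huS hvS hQ hTB (hSvk.trans_le hkT)
  obtain ⟨R, hR⟩ := hP'.exists_join (hQ.mono hHG) hP'Q
  exact ⟨T, hTB, hkT, R, hR⟩

theorem exists_isLinkage_of_forall_isSeparator [Finite α] {k : ℕ}
    (hk : ∀ S, IsSeparator G A B S → k ≤ S.ncard) :
    ∃ T ⊆ B, k ≤ T.ncard ∧ ∃ P, IsLinkage G A T P := by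
  induction hn : {e : α × α | G e.1 e.2}.ncard using Nat.strong_induction_on
    generalizing G A B k with
  | _ n ih =>
  by_cases hG : ∀ a b, ¬ G a b
  · exact ⟨A ∩ B, inter_subset_right, hk _ (isSeparator_inter hG), _,
      isLinkage_singleton.subset inter_subset_left⟩
  push Not at hG
  obtain ⟨u, v, huv⟩ := hG
  have hlt : ({e | G e.1 e.2} \ {(u, v)} : Set (α × α)).ncard < n :=
    hn ▸ ncard_sdiff_singleton_lt_of_mem huv
  exact exists_isLinkage_of_deleteEdge huv (fun _ _ => Iff.rfl)
    (fun A' B' hk' => ih _ hlt hk' rfl) hk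

def addSink (G : α → α → Prop) (Z : Set α) : Option α → Option α → Prop
  | some a, some b => G a b
  | some a, none => a ∈ Z
  | none, _ => False

section addSink

variable {Z X : Set α}

theorem IsPathList.map_some (hp : IsPathList G p) : IsPathList (addSink G Z) (p.map some) :=
  ⟨by simpa using hp.ne_nil, hp.nodup.map (Option.some_injective α), (isChain_map _).2 hp.isChain⟩

theorem FirstIn.map_some (h : FirstIn p X) : FirstIn (p.map some) (some '' X) := by
  obtain ⟨a, ha, hpa⟩ := h
  exact ⟨some a, mem_image_of_mem some ha, by simp [hpa]⟩

theorem IsPathList.map_some_append_none (hp : IsPathList G p) (hpZ : LastIn p Z) :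
    IsPathList (addSink G Z) (p.map some ++ [none]) := by
  obtain ⟨z, hz, hpz⟩ := hpZ
  refine hp.map_some.append isPathList_singleton (by simp) ?_
  simp only [getLast?_map, hpz, Option.map_some, Option.mem_def, Option.some.injEq,
    head?_cons, forall_eq']
  exact hz

theorem exists_isChain_of_isChain_addSink :
    ∀ {a : α} {p : List (Option α)}, (some a :: p).IsChain (addSink G Z) →
      ∃ q, (a :: q).IsChain G ∧ (some a :: p = (a :: q).map some ∨
        LastIn (a :: q) Z ∧ some a :: p = (a :: q).map some ++ [none])
  | a, [], _ => ⟨[], .singleton a, Or.inl rfl⟩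
  | a, none :: p, h => by
    obtain ⟨haZ, hp⟩ := isChain_cons_cons.1 h
    rcases p with _ | ⟨_, p⟩
    · exact ⟨[], .singleton a, Or.inr ⟨⟨a, haZ, rfl⟩, rfl⟩⟩
    · exact (isChain_cons_cons.1 hp).1.elim
  | a, some b :: p, h => by
    obtain ⟨hab, hp⟩ := isChain_cons_cons.1 h
    obtain ⟨q, hq, hpq⟩ := exists_isChain_of_isChain_addSink hp
    refine ⟨b :: q, hq.cons_cons hab, ?_⟩
    rcases hpq with hpq | ⟨⟨z, hz, hqz⟩, hpq⟩
    · exact Or.inl (by rw [hpq]; rfl)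
    · exact Or.inr ⟨⟨z, hz, by simpa using hqz⟩, by rw [hpq]; rfl⟩

theorem IsPathList.exists_of_addSink {p : List (Option α)} (hp : IsPathList (addSink G Z) p)
    (hpX : FirstIn p (some '' X)) :
    ∃ q, IsPathList G q ∧ FirstIn q X ∧
      (p = q.map some ∨ LastIn q Z ∧ p = q.map some ++ [none]) := by
  obtain ⟨_, ⟨x, hx, rfl⟩, hpx⟩ := hpX
  obtain ⟨p, rfl⟩ := head?_eq_some_iff.1 hpx
  obtain ⟨q, hq, hpq⟩ := exists_isChain_of_isChain_addSink hp.isChain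
  have hnodup : (x :: q).Nodup := by
    have := hp.nodup
    rcases hpq with h | ⟨-, h⟩ <;> rw [h] at this
    exacts [this.of_map _, (nodup_append.1 this).1.of_map _]
  exact ⟨x :: q, ⟨cons_ne_nil x q, hnodup, hq⟩, ⟨x, hx, rfl⟩, hpq⟩

theorem IsLinkage.exists_of_addSink {I : Set α} {R : Option α → List (Option α)}
    (hR : IsLinkage (addSink G Z) (some '' X) (insert none (some '' I)) R) :
    ∃ y ∈ Z, ∃ P, IsLinkage G X (insert y I) P := by
  classical
  set B : Set (Option α) := insert none (some '' I)
  choose! R' hR'path hR'X hR' using fun b (hb : b ∈ B) =>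
    (hR.isPathList hb).exists_of_addSink (hR.firstIn hb)
  have hmem {b x} (hb : b ∈ B) (hx : x ∈ R' b) : some x ∈ R b := by
    rcases hR' b hb with h | ⟨-, h⟩ <;> rw [h] <;> simp [hx]
  obtain ⟨y, hy, hR'y⟩ : LastIn (R' none) Z := by
    have hlast := hR.getLast?_eq (mem_insert none _)
    rcases hR' none (mem_insert _ _) with h | ⟨h, -⟩
    · rw [h, getLast?_map] at hlast
      simp at hlast
    · exact h
  have hR'I {i} (hi : i ∈ I) : (R' (some i)).getLast? = some i := by
    have hb : some i ∈ B := mem_insert_of_mem _ (mem_image_of_mem some hi)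
    have hlast := hR.getLast?_eq hb
    rcases hR' _ hb with h | ⟨-, h⟩ <;> rw [h] at hlast
    · simpa [getLast?_map] using hlast
    · simp at hlast
  set idx : α → Option α := fun w => if w = y then none else some w
  have hidx {w} (hw : w ∈ insert y I) : idx w ∈ B := by
    by_cases h : w = y
    · simp [idx, h, B]
    · simpa [idx, h, B] using (mem_insert_iff.1 hw).resolve_left h
  have hidx_inj : Injective idx := by
    intro w w' h
    by_cases hwy : w = y <;> by_cases hwy' : w' = y <;>
      simp only [idx, hwy, hwy', ↓reduceIte, reduceCtorEq, Option.some.injEq] at h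
    · exact hwy.trans hwy'.symm
    · exact h
  refine ⟨y, hy, fun w => R' (idx w), fun w hw => ⟨hR'path _ (hidx hw), hR'X _ (hidx hw), ?_⟩,
    fun w hw w' hw' hne x hx hx' => ?_⟩
  · by_cases h : w = y
    · simpa [idx, h] using hR'y
    · simpa [idx, h] using hR'I ((mem_insert_iff.1 hw).resolve_left h)
  · exact hR.2 (hidx hw) (hidx hw') (hidx_inj.ne hne) _ (hmem (hidx hw) hx)
      (hmem (hidx hw') hx')

end addSink

theorem ListsDisjoint.map {β : Type*} {f : α → β} (h : ListsDisjoint p q) (hf : Injective f) :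
    ListsDisjoint (p.map f) (q.map f) := by
  intro x hxp hxq
  obtain ⟨a, hap, rfl⟩ := mem_map.1 hxp
  exact h a hap ((mem_map_of_injective hf).1 hxq)

section gammoid

variable [Finite α] {X Y I J : Set α}

theorem le_ncard_of_isSeparator_addSink {P Q : α → List α} (hP : IsLinkage G X I P)
    (hQ : IsLinkage G X J Q) (hIJ : I.ncard < J.ncard) {S : Set (Option α)}
    (hS : IsSeparator (addSink G (J \ I)) (some '' X) (insert none (some '' I)) S) :
    I.ncard + 1 ≤ S.ncard := by
  by_cases hnone : none ∈ S
  · have hIS : I.ncard ≤ (S \ {none}).ncard := by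
      refine ncard_le_ncard_of_pairwise_listsDisjoint (P := fun i => (P i).map some)
        (hP.2.imp fun _ _ h => h.map (Option.some_injective α)) fun i hi => ?_
      obtain ⟨x, hx, hxS⟩ := hS _ (hP.isPathList hi).map_some (hP.firstIn hi).map_some
        ⟨some i, mem_insert_of_mem _ (mem_image_of_mem some hi), by simp [hP.getLast?_eq hi]⟩
      obtain ⟨y, -, rfl⟩ := mem_map.1 hx
      exact ⟨some y, hx, hxS, by simp⟩
    have := ncard_sdiff_singleton_add_one hnone
    omega
  · have hJS : J.ncard ≤ S.ncard := by
      refine ncard_le_ncard_of_pairwise_listsDisjoint (P := fun j => (Q j).map some)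
        (hQ.2.imp fun _ _ h => h.map (Option.some_injective α)) fun j hj => ?_
      by_cases hjI : j ∈ I
      · exact hS _ (hQ.isPathList hj).map_some (hQ.firstIn hj).map_some
          ⟨some j, mem_insert_of_mem _ (mem_image_of_mem some hjI), by simp [hQ.getLast?_eq hj]⟩
      obtain ⟨x, hx, hxS⟩ := hS _
        ((hQ.isPathList hj).map_some_append_none ⟨j, ⟨hj, hjI⟩, hQ.getLast?_eq hj⟩)
        ((hQ.firstIn hj).map_some.append _) ⟨none, mem_insert _ _, by simp⟩
      rcases mem_append.1 hx with hx | hx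
      · exact ⟨x, hx, hxS⟩
      · exact absurd (mem_singleton.1 hx ▸ hxS) hnone
    omega

theorem IsGammoidIndep.exists_insert (hI : IsGammoidIndep G X Y I)
    (hJ : IsGammoidIndep G X Y J) (hIJ : I.ncard < J.ncard) :
    ∃ y ∈ J, y ∉ I ∧ IsGammoidIndep G X Y (insert y I) := by
  obtain ⟨hIY, P, hP⟩ := isGammoidIndep_iff.1 hI
  obtain ⟨hJY, Q, hQ⟩ := isGammoidIndep_iff.1 hJ
  have hB : (insert none (some '' I)).ncard = I.ncard + 1 := by
    rw [ncard_insert_of_notMem (by simp), ncard_image_of_injective _ (Option.some_injective α)]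
  obtain ⟨T, hTB, hkT, R, hR⟩ := exists_isLinkage_of_forall_isSeparator (k := I.ncard + 1)
    fun S hS => le_ncard_of_isSeparator_addSink hP hQ hIJ hS
  rw [eq_of_subset_of_ncard_le hTB (hB.trans_le hkT)] at hR
  obtain ⟨y, hy, P', hP'⟩ := hR.exists_of_addSink
  exact ⟨y, hy.1, hy.2, insert_subset (hJY hy.1) hIY, P', hP'⟩

end gammoid

end

/-- The family of sink-sets of collections of pairwise vertex-disjoint
`X → Y` paths in a digraph `G` is the family of independent sets of a matroid
on `Y` (the gammoid `M(G,X,Y)`). -/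
theorem gammoid_matroid {V : Type*} [Fintype V]
    (G : V → V → Prop) (X Y : Set V) :
    ∃ M : Matroid V, M.E = Y ∧ ∀ I : Set V, M.Indep I ↔ IsGammoidIndep G X Y I := by
  refine ⟨(IndepMatroid.ofFinite Y.toFinite (IsGammoidIndep G X Y) ?_ ?_
    (fun I J hI hJ => hI.exists_insert hJ) fun I hI => hI.1).matroid, rfl, fun I => Iff.rfl⟩
  · exact ⟨empty_subset Y, fun _ => [], fun _ h => h.elim, pairwise_empty _⟩
  · intro I J hJ hIJ
    obtain ⟨hJY, P, hP⟩ := isGammoidIndep_iff.1 hJ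
    exact ⟨hIJ.trans hJY, P, hP.subset hIJ⟩
end

section
/- Let M_1 and M_2 be matroids on the same ground set E with rank functions r_1 and r_2. The maximum size of a set independent in both M_1 and M_2 equals min over U ⊆ E of (r_1(U) + r_2(E \ U)). -/
/-- The rank of `U` for an independence predicate: the maximum size of an
independent subset of `U`. -/
noncomputable def rankOf {α : Type*} (Ind : Set α → Prop) (U : Set α) : ℕ :=
  sSup {n | ∃ I ⊆ U, Ind I ∧ I.ncard = n}

open Set

namespace Matroid

variable {α : Type*} {M : Matroid α} {X Y I : Set α} {e : α}

lemma IsBasis'.rankOf_eq [M.RankFinite] (hI : M.IsBasis' I X) : rankOf M.Indep X = I.ncard := by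
  refine IsGreatest.csSup_eq ⟨⟨I, hI.subset, hI.indep, rfl⟩, ?_⟩
  rintro _ ⟨J, hJX, hJ, rfl⟩
  have hle : J.encard ≤ I.encard := hI.encard_eq_eRk ▸ hJ.encard_le_eRk_of_subset hJX
  rwa [← hJ.finite.cast_ncard_eq, ← hI.indep.finite.cast_ncard_eq, Nat.cast_le] at hle

lemma cast_rankOf (M : Matroid α) [M.RankFinite] (X : Set α) :
    (rankOf M.Indep X : ℕ∞) = M.eRk X := by
  obtain ⟨I, hI⟩ := M.exists_isBasis' X
  rw [hI.rankOf_eq, hI.indep.finite.cast_ncard_eq, hI.encard_eq_eRk]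

variable [M.RankFinite]

lemma Indep.ncard_le_rankOf (hI : M.Indep I) (hIX : I ⊆ X) : I.ncard ≤ rankOf M.Indep X := by
  have h := hI.encard_le_eRk_of_subset hIX
  rwa [← hI.finite.cast_ncard_eq, ← cast_rankOf, Nat.cast_le] at h

lemma rankOf_inter_add_rankOf_union_le (X Y : Set α) :
    rankOf M.Indep (X ∩ Y) + rankOf M.Indep (X ∪ Y) ≤ rankOf M.Indep X + rankOf M.Indep Y := by
  have h := M.eRk_inter_add_eRk_union_le X Y
  simp only [← cast_rankOf] at h
  exact_mod_cast h

lemma rankOf_eq_zero_of_subset_loops (hX : X ⊆ M.loops) : rankOf M.Indep X = 0 := by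
  have h := (M.eRk_eq_zero_iff (hX.trans M.loops_subset_ground)).2 hX
  rwa [← cast_rankOf, Nat.cast_eq_zero] at h

lemma rankOf_delete (hX : X ⊆ M.E \ Y) : rankOf (M ＼ Y).Indep X = rankOf M.Indep X := by
  have h := M.restrict_eRk_eq hX
  simp only [← cast_rankOf] at h
  exact_mod_cast h

lemma IsNonloop.rankOf_contractElem_add_one (he : M.IsNonloop e) (hX : X ⊆ M.E \ {e}) :
    rankOf (M ／ {e}).Indep X + 1 = rankOf M.Indep (insert e X) := by
  obtain ⟨J, hJ⟩ := (M ／ {e}).exists_isBasis X hX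
  have hJe : e ∉ J := fun h ↦ (hX (hJ.subset h)).2 rfl
  have hB := he.indep.union_isBasis_union_of_contract_isBasis hJ
  rw [union_singleton, union_singleton] at hB
  rw [hJ.isBasis'.rankOf_eq, hB.isBasis'.rankOf_eq,
    ncard_insert_of_notMem hJe hJ.indep.of_contract.finite]

noncomputable def maxCommonIndepCard (M₁ M₂ : Matroid α) : ℕ :=
  sSup {n | ∃ I, M₁.Indep I ∧ M₂.Indep I ∧ I.ncard = n}

section Intersection

variable {M₁ M₂ : Matroid α} [M₁.RankFinite]

variable (M₁ M₂) in
lemma bddAbove_commonIndep_ncard :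
    BddAbove {n | ∃ I, M₁.Indep I ∧ M₂.Indep I ∧ I.ncard = n} :=
  ⟨rankOf M₁.Indep univ, by
    rintro _ ⟨I, hI₁, -, rfl⟩
    exact hI₁.ncard_le_rankOf (subset_univ I)⟩

lemma Indep.ncard_le_maxCommonIndepCard (h₁ : M₁.Indep I) (h₂ : M₂.Indep I) :
    I.ncard ≤ maxCommonIndepCard M₁ M₂ :=
  le_csSup (bddAbove_commonIndep_ncard M₁ M₂) ⟨I, h₁, h₂, rfl⟩

variable (M₁ M₂) in
lemma exists_commonIndep_ncard_eq :
    ∃ I, M₁.Indep I ∧ M₂.Indep I ∧ I.ncard = maxCommonIndepCard M₁ M₂ :=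
  Nat.sSup_mem (s := {n | ∃ I, M₁.Indep I ∧ M₂.Indep I ∧ I.ncard = n})
    ⟨0, ∅, M₁.empty_indep, M₂.empty_indep, ncard_empty α⟩ (bddAbove_commonIndep_ncard M₁ M₂)

lemma maxCommonIndepCard_le_rankOf_add_rankOf [M₂.RankFinite] (hE : M₁.E = M₂.E) (U : Set α) :
    maxCommonIndepCard M₁ M₂ ≤ rankOf M₁.Indep U + rankOf M₂.Indep (M₁.E \ U) := by
  obtain ⟨I, hI₁, hI₂, hI⟩ := exists_commonIndep_ncard_eq M₁ M₂
  have h₁ := (hI₁.inter_right U).ncard_le_rankOf inter_subset_right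
  have h₂ := (hI₂.sdiff U).ncard_le_rankOf (sdiff_subset_sdiff_left (hE ▸ hI₂.subset_ground))
  have := ncard_inter_add_ncard_sdiff_eq_ncard I U hI₁.finite
  omega

lemma maxCommonIndepCard_delete_le (D : Set α) :
    maxCommonIndepCard (M₁ ＼ D) (M₂ ＼ D) ≤ maxCommonIndepCard M₁ M₂ := by
  obtain ⟨I, hI₁, hI₂, hI⟩ := exists_commonIndep_ncard_eq (M₁ ＼ D) (M₂ ＼ D)
  exact hI ▸ hI₁.of_delete.ncard_le_maxCommonIndepCard hI₂.of_delete

lemma maxCommonIndepCard_contractElem_add_one_le (he₁ : M₁.IsNonloop e) (he₂ : M₂.IsNonloop e) :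
    maxCommonIndepCard (M₁ ／ {e}) (M₂ ／ {e}) + 1 ≤ maxCommonIndepCard M₁ M₂ := by
  obtain ⟨I, hI₁, hI₂, hI⟩ := exists_commonIndep_ncard_eq (M₁ ／ {e}) (M₂ ／ {e})
  rw [he₁.contractElem_indep_iff] at hI₁
  rw [he₂.contractElem_indep_iff] at hI₂
  have h := hI₁.2.ncard_le_maxCommonIndepCard hI₂.2
  rwa [ncard_insert_of_notMem hI₁.1 (hI₁.2.finite.subset (subset_insert e I)), hI] at h

variable [M₂.RankFinite]

lemma rankOf_loops_add_rankOf_sdiff_loops_eq_zero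
    (hloop : ∀ e ∈ M₁.E, M₁.IsLoop e ∨ M₂.IsLoop e) :
    rankOf M₁.Indep M₁.loops + rankOf M₂.Indep (M₁.E \ M₁.loops) = 0 := by
  have hsub : M₁.E \ M₁.loops ⊆ M₂.loops := fun x ⟨hxE, hx⟩ ↦ (hloop x hxE).resolve_left hx
  rw [rankOf_eq_zero_of_subset_loops subset_rfl, rankOf_eq_zero_of_subset_loops hsub]

lemma exists_rankOf_add_rankOf_le_of_uncrossing {E U₁ U₂ : Set α} {k : ℕ} (heE : e ∈ E)
    (hU₁ : U₁ ⊆ E \ {e}) (hU₂ : U₂ ⊆ E \ {e})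
    (hdel : rankOf M₁.Indep U₁ + rankOf M₂.Indep ((E \ {e}) \ U₁) ≤ k)
    (hcon : rankOf M₁.Indep (insert e U₂) + rankOf M₂.Indep (E \ U₂) ≤ k + 1) :
    ∃ U ⊆ E, rankOf M₁.Indep U + rankOf M₂.Indep (E \ U) ≤ k := by
  have heU₁ : e ∉ U₁ := fun h ↦ (hU₁ h).2 rfl
  have heU₂ : e ∉ U₂ := fun h ↦ (hU₂ h).2 rfl
  have hinter : (E \ {e}) \ U₁ ∩ (E \ U₂) = E \ (U₁ ∪ insert e U₂) := by
    ext x; simp only [mem_inter_iff, mem_sdiff, mem_singleton_iff, mem_union, mem_insert_iff]; tauto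
  have hunion : (E \ {e}) \ U₁ ∪ (E \ U₂) = E \ (U₁ ∩ insert e U₂) := by
    ext x; by_cases hx : x = e
    · subst hx; simp [heE, heU₁, heU₂]
    · simp only [mem_union, mem_sdiff, mem_singleton_iff, mem_inter_iff, mem_insert_iff, hx]; tauto
  have h₁ := rankOf_inter_add_rankOf_union_le (M := M₁) U₁ (insert e U₂)
  have h₂ := rankOf_inter_add_rankOf_union_le (M := M₂) ((E \ {e}) \ U₁) (E \ U₂)
  rw [hinter, hunion] at h₂
  have hsub : U₁ ⊆ E := hU₁.trans sdiff_subset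
  by_cases h : rankOf M₁.Indep (U₁ ∩ insert e U₂) + rankOf M₂.Indep (E \ (U₁ ∩ insert e U₂)) ≤ k
  · exact ⟨_, inter_subset_left.trans hsub, h⟩
  · exact ⟨_, union_subset hsub (insert_subset heE (hU₂.trans sdiff_subset)), by omega⟩

end Intersection

theorem exists_rankOf_add_rankOf_le_maxCommonIndepCard (M₁ M₂ : Matroid α) [M₁.Finite]
    (hE : M₁.E = M₂.E) :
    ∃ U ⊆ M₁.E, rankOf M₁.Indep U + rankOf M₂.Indep (M₁.E \ U) ≤ maxCommonIndepCard M₁ M₂ := by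
  induction hn : M₁.E.ncard using Nat.strong_induction_on generalizing M₁ M₂ with
  | _ n ih =>
  have : M₂.Finite := ⟨hE ▸ M₁.ground_finite⟩
  by_cases hloop : ∀ e ∈ M₁.E, M₁.IsLoop e ∨ M₂.IsLoop e
  · exact ⟨M₁.loops, M₁.loops_subset_ground,
      (rankOf_loops_add_rankOf_sdiff_loops_eq_zero hloop).trans_le (Nat.zero_le _)⟩
  push Not at hloop
  obtain ⟨e, heE, hl₁, hl₂⟩ := hloop
  have he₁ : M₁.IsNonloop e := (not_isLoop_iff heE).1 hl₁
  have he₂ : M₂.IsNonloop e := (not_isLoop_iff (hE ▸ heE)).1 hl₂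
  have hlt : (M₁.E \ {e}).ncard < n := hn ▸ ncard_sdiff_singleton_lt_of_mem heE M₁.ground_finite
  obtain ⟨U₁, hU₁, hdel⟩ := ih _ hlt (M₁ ＼ {e}) (M₂ ＼ {e}) (by simp [hE]) (by simp)
  obtain ⟨U₂, hU₂, hcon⟩ := ih _ hlt (M₁ ／ {e}) (M₂ ／ {e}) (by simp [hE]) (by simp)
  simp only [delete_ground, contract_ground] at hU₁ hU₂ hdel hcon
  rw [rankOf_delete hU₁, rankOf_delete (hE ▸ sdiff_subset)] at hdel
  have hcon₁ := he₁.rankOf_contractElem_add_one hU₂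
  have hcon₂ := he₂.rankOf_contractElem_add_one (X := (M₁.E \ {e}) \ U₂) (hE ▸ sdiff_subset)
  have hins : insert e ((M₁.E \ {e}) \ U₂) = M₁.E \ U₂ := by
    rw [sdiff_right_comm, insert_sdiff_singleton,
      insert_eq_of_mem (show e ∈ M₁.E \ U₂ from ⟨heE, fun h ↦ (hU₂ h).2 rfl⟩)]
  rw [hins] at hcon₂
  refine exists_rankOf_add_rankOf_le_of_uncrossing heE hU₁ hU₂
    (hdel.trans (maxCommonIndepCard_delete_le _)) ?_
  have := maxCommonIndepCard_contractElem_add_one_le he₁ he₂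
  omega

theorem isLeast_rankOf_add_rankOf_sdiff (M₁ M₂ : Matroid α) [M₁.Finite] (hE : M₁.E = M₂.E) :
    IsLeast {n | ∃ U ⊆ M₁.E, n = rankOf M₁.Indep U + rankOf M₂.Indep (M₁.E \ U)}
      (maxCommonIndepCard M₁ M₂) := by
  have : M₂.Finite := ⟨hE ▸ M₁.ground_finite⟩
  obtain ⟨U, hU, hle⟩ := exists_rankOf_add_rankOf_le_maxCommonIndepCard M₁ M₂ hE
  refine ⟨⟨U, hU, le_antisymm (maxCommonIndepCard_le_rankOf_add_rankOf hE U) hle⟩, ?_⟩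
  rintro _ ⟨V, -, rfl⟩
  exact maxCommonIndepCard_le_rankOf_add_rankOf hE V

end Matroid

/-- Matroid intersection theorem (Edmonds): for matroids `M₁, M₂` on a common
ground set `E`, the maximum size of a common independent set equals
`min over U ⊆ E of (r₁(U) + r₂(E \ U))`. -/
theorem matroid_intersection {α : Type*} [Fintype α] (E : Set α)
    (M₁ M₂ : Matroid α) (h₁ : M₁.E = E) (h₂ : M₂.E = E) :
    sSup {n : ℕ | ∃ I : Set α, M₁.Indep I ∧ M₂.Indep I ∧ I.ncard = n} =
    sInf {n : ℕ | ∃ U ⊆ E, n = rankOf M₁.Indep U + rankOf M₂.Indep (E \ U)} := by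
  subst h₁
  exact (Matroid.isLeast_rankOf_add_rankOf_sdiff M₁ M₂ h₂.symm).csInf_eq.symm
end
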